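/- Entropy equality (local reversibility) in the usual theory (Theorem 7.5): Under the same hypotheses as the vanishing internal dissipation theorem — constitutive restrictions η̄ = −∂_θ ψ̄, π̄ = −∂_E ψ̄, ⟨τ̄, H F⁻¹⟩_Frob = ρ⟨∂_F ψ̄, H⟩_Frob for all H, with ψ̄ = ψ̄(F, θ, E) of class C¹; a differentiable path t ↦ (F(t), θ(t), E(t)); and functions r(t), d(t) satisfying the energy balance ρ ε̇ = ⟨τ, Ḟ F⁻¹⟩_Frob − d + ρ⟨E, π̇⟩ + ρ r with ε = ψ + θη + ⟨E, π⟩ — the entropy equality ρ(t) η̇(t) = ρ(t) r(t)/θ(t) − d(t)/θ(t) holds for all t; i.e., every thermo-electroelastic process of the usual theory is locally reversible. -/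

import Mathlib

/-
Along a process, differentiate `ε = ψ + θη + ⟨E, π⟩` by the chain and product rules. Splitting
`ψ̇ = ∂_F ψ[Ḟ] + θ̇ ∂_θ ψ + ∂_E ψ[Ė]` and inserting the constitutive restrictions gives the Gibbs
relation `ρ ψ̇ = ⟨τ, Ḟ F⁻¹⟩ − ρ θ̇ η − ρ ⟨Ė, π⟩`, so `ρ ε̇ = ⟨τ, Ḟ F⁻¹⟩ + ρ θ η̇ + ρ ⟨E, π̇⟩`.
Comparing with the energy balance leaves `ρ θ η̇ = ρ r − d`; divide by `θ > 0`.
-/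

open Matrix

abbrev V3 : Type := Fin 3 → ℝ
abbrev Mat3 : Type := Matrix (Fin 3) (Fin 3) ℝ

noncomputable instance : NormedAddCommGroup Mat3 :=
  inferInstanceAs (NormedAddCommGroup (Fin 3 → Fin 3 → ℝ))
noncomputable instance : NormedSpace ℝ Mat3 :=
  inferInstanceAs (NormedSpace ℝ (Fin 3 → Fin 3 → ℝ))

/-- The Frobenius inner product `⟨A, B⟩ = tr(Aᵀ B)` of 3×3 matrices. -/
noncomputable def frob (A B : Mat3) : ℝ := (Aᵀ * B).trace

/-- The `j`-th standard basis vector of `ℝ³`. -/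
noncomputable def e3 (j : Fin 3) : V3 := Pi.single j 1

/-- A (not necessarily symmetric) matrix is positive definite:
`⟨v, M v⟩ > 0` for all nonzero `v`. -/
def PosDef3 (M : Mat3) : Prop := ∀ v : V3, v ≠ 0 → 0 < v ⬝ᵥ M.mulVec v

/-- A state `(F, θ, E)` of the usual theory (the constitutive functions do not
depend on the temperature gradient). -/
abbrev St3 : Type := Mat3 × ℝ × V3

theorem HasDerivAt.fst {𝕜 E F : Type*} [NontriviallyNormedField 𝕜] [NormedAddCommGroup E]
    [NormedSpace 𝕜 E] [NormedAddCommGroup F] [NormedSpace 𝕜 F] {f : 𝕜 → E × F} {f' : E × F}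
    {x : 𝕜} (hf : HasDerivAt f f' x) : HasDerivAt (fun u => (f u).1) f'.1 x :=
  (hasFDerivAt_fst.comp_hasDerivAt x hf :)

theorem HasDerivAt.snd {𝕜 E F : Type*} [NontriviallyNormedField 𝕜] [NormedAddCommGroup E]
    [NormedSpace 𝕜 E] [NormedAddCommGroup F] [NormedSpace 𝕜 F] {f : 𝕜 → E × F} {f' : E × F}
    {x : 𝕜} (hf : HasDerivAt f f' x) : HasDerivAt (fun u => (f u).2) f'.2 x :=
  (hasFDerivAt_snd.comp_hasDerivAt x hf :)

theorem HasDerivAt.dotProduct {𝕜 ι : Type*} [NontriviallyNormedField 𝕜] [Fintype ι]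
    {f g : 𝕜 → ι → 𝕜} {f' g' : ι → 𝕜} {x : 𝕜} (hf : HasDerivAt f f' x)
    (hg : HasDerivAt g g' x) :
    HasDerivAt (fun u => f u ⬝ᵥ g u) (f' ⬝ᵥ g x + f x ⬝ᵥ g') x := by
  have hsum : HasDerivAt (fun u => ∑ i, f u i * g u i) (∑ i, (f' i * g x i + f x i * g' i)) x :=
    HasDerivAt.fun_sum fun i _ => ((hasDerivAt_pi.mp hf) i).mul ((hasDerivAt_pi.mp hg) i)
  simpa only [_root_.dotProduct, Finset.sum_add_distrib] using hsum

theorem LinearMap.apply_eq_add_smul_add {R M N P : Type*} [Semiring R] [AddCommMonoid M]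
    [Module R M] [AddCommMonoid N] [Module R N] [AddCommMonoid P] [Module R P]
    (L : M × R × N →ₗ[R] P) (p : M × R × N) :
    L p = L (p.1, 0, 0) + p.2.1 • L (0, 1, 0) + L (0, 0, p.2.2) := by
  obtain ⟨m, a, n⟩ := p
  rw [← L.map_smul, ← L.map_add, ← L.map_add]
  congr 1; simp

section InternalEnergy

variable {M ι : Type*} [NormedAddCommGroup M] [NormedSpace ℝ M] [Fintype ι]
  {ψ η : M × ℝ × (ι → ℝ) → ℝ} {π : M × ℝ × (ι → ℝ) → ι → ℝ} {s : ℝ → M × ℝ × (ι → ℝ)} {t : ℝ}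

theorem deriv_internalEnergy (hs : DifferentiableAt ℝ s t) (hψ : DifferentiableAt ℝ ψ (s t))
    (hη : DifferentiableAt ℝ η (s t)) (hπ : DifferentiableAt ℝ π (s t)) :
    deriv (fun u => ψ (s u) + (s u).2.1 * η (s u) + (s u).2.2 ⬝ᵥ π (s u)) t
      = fderiv ℝ ψ (s t) (deriv s t)
        + (deriv s t).2.1 * η (s t) + (s t).2.1 * deriv (fun u => η (s u)) t
        + (deriv s t).2.2 ⬝ᵥ π (s t) + (s t).2.2 ⬝ᵥ deriv (fun u => π (s u)) t := by
  have hst := hs.hasDerivAt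
  have hηs : HasDerivAt (fun u => η (s u)) _ t := hη.hasFDerivAt.comp_hasDerivAt t hst
  have hπs : HasDerivAt (fun u => π (s u)) _ t := hπ.hasFDerivAt.comp_hasDerivAt t hst
  have hε := ((hψ.hasFDerivAt.comp_hasDerivAt t hst).add (hst.snd.fst.mul hηs)).add
    (hst.snd.snd.dotProduct hπs)
  refine hε.deriv.trans ?_
  rw [hηs.deriv, hπs.deriv]
  ring

end InternalEnergy

theorem mul_fderiv_freeEnergy_eq {ψ η : St3 → ℝ} {τ : St3 → Mat3} {π : St3 → V3} {x : St3}
    {ρ : ℝ} (hηψ : η x = -fderiv ℝ ψ x (0, 1, 0))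
    (hπψ : ∀ v : V3, π x ⬝ᵥ v = -fderiv ℝ ψ x (0, 0, v))
    (hτψ : ∀ H : Mat3, frob (τ x) (H * x.1⁻¹) = ρ * fderiv ℝ ψ x (H, 0, 0)) (p : St3) :
    ρ * fderiv ℝ ψ x p = frob (τ x) (p.1 * x.1⁻¹) - ρ * (p.2.1 * η x + p.2.2 ⬝ᵥ π x) := by
  have hsplit : fderiv ℝ ψ x p
      = fderiv ℝ ψ x (p.1, 0, 0) + p.2.1 • fderiv ℝ ψ x (0, 1, 0) + fderiv ℝ ψ x (0, 0, p.2.2) :=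
    (fderiv ℝ ψ x).toLinearMap.apply_eq_add_smul_add p
  rw [hsplit, dotProduct_comm, hτψ, hηψ, hπψ, smul_eq_mul]
  ring

theorem entropy_equality_usual_general
    (ρR : ℝ)
    (D : Set St3) (hD : IsOpen D)
    (hadm : ∀ (F : Mat3) (θ : ℝ) (E : V3),
      ((F, θ, E) : St3) ∈ D → 0 < F.det ∧ 0 < θ)
    (ψ η : St3 → ℝ) (τ : St3 → Mat3) (π : St3 → V3)
    (hψ : ContDiffOn ℝ 1 ψ D) (hη : ContDiffOn ℝ 1 η D)
    (hπ : ContDiffOn ℝ 1 π D)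
    -- the constitutive restrictions of the usual theory:
    (hηψ : ∀ s ∈ D, η s = - fderiv ℝ ψ s (0, 1, 0))
    (hπψ : ∀ s ∈ D, ∀ v : V3, π s ⬝ᵥ v = - fderiv ℝ ψ s (0, 0, v))
    (hτψ : ∀ (F : Mat3) (θ : ℝ) (E : V3), ((F, θ, E) : St3) ∈ D →
      ∀ H : Mat3,
        frob (τ (F, θ, E)) (H * F⁻¹)
          = (ρR / F.det) * fderiv ℝ ψ (F, θ, E) (H, 0, 0))
    -- a differentiable path of states:
    (s : ℝ → St3) (hs : Differentiable ℝ s) (hsD : ∀ t, s t ∈ D)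
    -- radiant heating and divergence of the heat flux, satisfying the energy balance:
    (r d : ℝ → ℝ)
    (henergy : ∀ t,
      (ρR / ((s t).1).det) *
          deriv (fun u => ψ (s u) + (s u).2.1 * η (s u) + (s u).2.2 ⬝ᵥ π (s u)) t
        = frob (τ (s t)) (deriv (fun u => (s u).1) t * ((s t).1)⁻¹)
          - d t
          + (ρR / ((s t).1).det) * ((s t).2.2 ⬝ᵥ deriv (fun u => π (s u)) t)
          + (ρR / ((s t).1).det) * r t) :
    -- conclusion: the entropy equality ρ η̇ = ρ r/θ − d/θ
    ∀ t : ℝ,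
      (ρR / ((s t).1).det) * deriv (fun u => η (s u)) t
        = (ρR / ((s t).1).det) * r t / (s t).2.1 - d t / (s t).2.1 := by
  intro t
  set ρ := ρR / ((s t).1).det
  have hnhds : D ∈ nhds (s t) := hD.mem_nhds (hsD t)
  have hθ : (s t).2.1 ≠ 0 := (hadm _ _ _ (hsD t)).2.ne'
  have hgibbs := mul_fderiv_freeEnergy_eq (ρ := ρ) (hηψ _ (hsD t))
    (hπψ _ (hsD t)) (hτψ _ _ _ (hsD t)) (deriv s t)
  have hbalance := henergy t
  rw [deriv_internalEnergy (hs t) ((hψ.contDiffAt hnhds).differentiableAt one_ne_zero)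
    ((hη.contDiffAt hnhds).differentiableAt one_ne_zero)
    ((hπ.contDiffAt hnhds).differentiableAt one_ne_zero), (hs t).hasDerivAt.fst.deriv]
    at hbalance
  have hθη : (s t).2.1 * (ρ * deriv (fun u => η (s u)) t) = ρ * r t - d t := by
    linear_combination hbalance - hgibbs
  field_simp
  linear_combination hθη

/-- **Entropy equality (local reversibility) in the usual theory (Theorem 7.5).** -/
theorem entropy_equality_usual
    (ρR : ℝ) (hρR : 0 < ρR)
    (D : Set St3) (hD : IsOpen D)
    (hadm : ∀ (F : Mat3) (θ : ℝ) (E : V3),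
      ((F, θ, E) : St3) ∈ D → 0 < F.det ∧ 0 < θ)
    (ψ η : St3 → ℝ) (τ : St3 → Mat3) (π : St3 → V3)
    (hψ : ContDiffOn ℝ 1 ψ D) (hη : ContDiffOn ℝ 1 η D)
    (hτ : ContDiffOn ℝ 1 τ D) (hπ : ContDiffOn ℝ 1 π D)
    -- the constitutive restrictions of the usual theory:
    (hηψ : ∀ s ∈ D, η s = - fderiv ℝ ψ s (0, 1, 0))
    (hπψ : ∀ s ∈ D, ∀ v : V3, π s ⬝ᵥ v = - fderiv ℝ ψ s (0, 0, v))
    (hτψ : ∀ (F : Mat3) (θ : ℝ) (E : V3), ((F, θ, E) : St3) ∈ D →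
      ∀ H : Mat3,
        frob (τ (F, θ, E)) (H * F⁻¹)
          = (ρR / F.det) * fderiv ℝ ψ (F, θ, E) (H, 0, 0))
    -- a differentiable path of states:
    (s : ℝ → St3) (hs : Differentiable ℝ s) (hsD : ∀ t, s t ∈ D)
    -- radiant heating and divergence of the heat flux, satisfying the energy balance:
    (r d : ℝ → ℝ)
    (henergy : ∀ t,
      (ρR / ((s t).1).det) *
          deriv (fun u => ψ (s u) + (s u).2.1 * η (s u) + (s u).2.2 ⬝ᵥ π (s u)) t
        = frob (τ (s t)) (deriv (fun u => (s u).1) t * ((s t).1)⁻¹)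
          - d t
          + (ρR / ((s t).1).det) * ((s t).2.2 ⬝ᵥ deriv (fun u => π (s u)) t)
          + (ρR / ((s t).1).det) * r t) :
    -- conclusion: the entropy equality ρ η̇ = ρ r/θ − d/θ
    ∀ t : ℝ,
      (ρR / ((s t).1).det) * deriv (fun u => η (s u)) t
        = (ρR / ((s t).1).det) * r t / (s t).2.1 - d t / (s t).2.1 :=
  entropy_equality_usual_general ρR D hD hadm ψ η τ π hψ hη hπ hηψ hπψ hτψ s hs hsD r d henergy
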